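/- Let K be a compact Hausdorff space, E a Banach space, H a closed subspace of C(K,E), and B a boundary for H (i.e., for every h in H, the sup-norm of h equals the supremum of ||h(x)|| over x in B). Let n be a natural number, C a real constant, α_1,...,α_n positive reals, U_1,...,U_n pairwise disjoint nonempty open subsets of K, and h_1,...,h_n functions in H such that for each i, ||h_i(x)|| ≤ C for all x in K and ||h_i(x)|| < α_i for all x in B \ U_i. Then ||∑_{i=1}^n h_i|| ≤ C + ∑_{i=1}^n α_i. -/

import Mathlib

open Set ZeroAtInfty Ordinal

noncomputable section

/-- Iterated Cantor–Bendixson derivative, indexed by ordinals. -/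
def cbDeriv {S : Type*} [TopologicalSpace S] (F : Set S) : Ordinal → Set S :=
  fun o => Ordinal.limitRecOn o F (fun _ ih => derivedSet ih)
    (fun o _ ih => ⋂ (β : {β // β < o}), ih β β.2)

/-- The function `f ⊗ e : x ↦ f x • e`. -/
def tensor {K : Type*} [TopologicalSpace K] {E : Type*} [NormedAddCommGroup E]
    [NormedSpace ℝ E] (f : C(K, ℝ)) (e : E) : C(K, E) :=
  ⟨fun x => f x • e, (map_continuous f).smul continuous_const⟩

/-- `E` contains an isomorphic copy of `c₀`. -/
def ContainsCopyOfC0 (E : Type*) [NormedAddCommGroup E] [NormedSpace ℝ E] : Prop :=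
  ∃ T : C₀(ℕ, ℝ) →L[ℝ] E, ∃ c > 0, ∀ x, c * ‖x‖ ≤ ‖T x‖

/-- The canonical scalar function space associated to `H ⊆ C(K,E)`:
the closed linear span of `{e* ∘ h : e* ∈ E*, h ∈ H}`. -/
def scalarSpace {K : Type*} [TopologicalSpace K] [CompactSpace K]
    {E : Type*} [NormedAddCommGroup E] [NormedSpace ℝ E]
    (H : Submodule ℝ C(K, E)) : Submodule ℝ C(K, ℝ) :=
  (Submodule.span ℝ {f : C(K, ℝ) | ∃ φ : E →L[ℝ] ℝ, ∃ h ∈ H,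
      f = ⟨fun x => φ (h x), φ.continuous.comp (map_continuous h)⟩}).topologicalClosure

/-- The evaluation functional `i(x) : A → ℝ`, `h ↦ h x`. -/
def evalFun {K : Type*} [TopologicalSpace K] [CompactSpace K]
    (A : Submodule ℝ C(K, ℝ)) (x : K) : ↥A →L[ℝ] ℝ :=
  LinearMap.mkContinuous
    { toFun := fun h => (h : C(K, ℝ)) x
      map_add' := fun a b => rfl
      map_smul' := fun c a => rfl } 1
    (fun h => by simpa using (h : C(K, ℝ)).norm_coe_le_norm x)

/-- The Choquet boundary of `H ⊆ C(K,E)`: points whose evaluation functional is an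
extreme point of the dual unit ball of the associated scalar space. -/
def ChoquetBoundary {K : Type*} [TopologicalSpace K] [CompactSpace K]
    {E : Type*} [NormedAddCommGroup E] [NormedSpace ℝ E]
    (H : Submodule ℝ C(K, E)) : Set K :=
  {x | evalFun (scalarSpace H) x ∈
      Set.extremePoints ℝ (@Metric.closedBall (↥(scalarSpace H) →L[ℝ] ℝ)
        (ContinuousLinearMap.toPseudoMetricSpace (E := ↥(scalarSpace H)) (F := ℝ)
          (σ₁₂ := RingHom.id ℝ)) 0 1)}

/-- `A^E`: elements `f` of the scalar space with `f ⊗ e ∈ H` for all `e`. -/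
def AE {K : Type*} [TopologicalSpace K] [CompactSpace K]
    {E : Type*} [NormedAddCommGroup E] [NormedSpace ℝ E]
    (H : Submodule ℝ C(K, E)) : Set C(K, ℝ) :=
  {f | f ∈ scalarSpace H ∧ ∀ e : E, tensor f e ∈ H}

/-- Weak peak point of `H ⊆ C(K,E)`. -/
def IsWeakPeakPoint {K : Type*} [TopologicalSpace K] [CompactSpace K]
    {E : Type*} [NormedAddCommGroup E] [NormedSpace ℝ E]
    (H : Submodule ℝ C(K, E)) (x : K) : Prop :=
  ∀ U ∈ nhds x, ∀ ε ∈ Set.Ioo (0 : ℝ) 1, ∃ f ∈ AE H,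
    (∀ y, f y ∈ Set.Icc (0 : ℝ) 1) ∧ 1 - ε < f x ∧
      ∀ y ∈ ChoquetBoundary H \ U, f y < ε

/-- `Ω_H = { y : ∃ g ∈ H, g y ≠ 0 }`. -/
def OmegaSet {K : Type*} [TopologicalSpace K] [CompactSpace K]
    {E : Type*} [NormedAddCommGroup E] [NormedSpace ℝ E]
    (H : Submodule ℝ C(K, E)) : Set K :=
  {y | ∃ g ∈ H, (g : C(K, E)) y ≠ 0}

theorem Finset.sum_le_add_sum_of_subsingleton {ι : Type*} [Fintype ι] {f α : ι → ℝ} {C : ℝ}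
    {S : Set ι} (hS : S.Subsingleton) (hC : 0 ≤ C) (hα : ∀ i, 0 ≤ α i)
    (hfS : ∀ i ∈ S, f i ≤ C) (hfα : ∀ i ∉ S, f i ≤ α i) :
    ∑ i, f i ≤ C + ∑ i, α i := by
  classical
  have hf : ∀ i, f i ≤ S.indicator (fun _ ↦ C) i + α i := by
    intro i
    by_cases hi : i ∈ S
    · simpa [hi] using (hfS i hi).trans (le_add_of_nonneg_right (hα i))
    · simpa [hi] using hfα i hi
  have hind : ∑ i, S.indicator (fun _ ↦ C) i ≤ C := by
    rcases hS.eq_empty_or_singleton with rfl | ⟨j, rfl⟩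
    · simpa using hC
    · simp [Set.indicator_singleton]
  calc ∑ i, f i ≤ ∑ i, (S.indicator (fun _ ↦ C) i + α i) := Finset.sum_le_sum fun i _ ↦ hf i
    _ ≤ C + ∑ i, α i := by rw [Finset.sum_add_distrib]; gcongr

theorem stmt_0_general {K : Type*} [TopologicalSpace K] [CompactSpace K]
    {E : Type*} [NormedAddCommGroup E] [NormedSpace ℝ E]
    (H : Submodule ℝ C(K, E))
    (B : Set K)
    (hB : ∀ g ∈ H, ‖g‖ = ⨆ x : B, ‖g (x : K)‖)
    (n : ℕ) (hn : 0 < n) (C : ℝ) (α : Fin n → ℝ) (hα : ∀ i, 0 < α i)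
    (U : Fin n → Set K) (hUne : ∀ i, (U i).Nonempty)
    (hUdisj : Pairwise (fun i j => Disjoint (U i) (U j)))
    (h : Fin n → C(K, E)) (hmem : ∀ i, h i ∈ H)
    (hC : ∀ i, ∀ x, ‖h i x‖ ≤ C)
    (hsmall : ∀ i, ∀ x ∈ B \ U i, ‖h i x‖ < α i) :
    ‖∑ i, h i‖ ≤ C + ∑ i, α i := by
  obtain ⟨x₀, -⟩ := hUne ⟨0, hn⟩
  have hC₀ : 0 ≤ C := (norm_nonneg _).trans (hC ⟨0, hn⟩ x₀)
  rw [hB _ (Submodule.sum_mem _ fun i _ ↦ hmem i)]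
  refine Real.iSup_le (fun x ↦ ?_) (add_nonneg hC₀ (Finset.sum_nonneg fun i _ ↦ (hα i).le))
  calc ‖(∑ i, h i) x‖ = ‖∑ i, h i x‖ := by rw [ContinuousMap.sum_apply]
    _ ≤ ∑ i, ‖h i x‖ := norm_sum_le _ _
    _ ≤ C + ∑ i, α i :=
      Finset.sum_le_add_sum_of_subsingleton
        (subsingleton_setOfPred_mem_iff_pairwise_disjoint.2 hUdisj x) hC₀ (fun i ↦ (hα i).le)
        (fun i _ ↦ hC i x) (fun i hi ↦ (hsmall i x ⟨x.2, hi⟩).le)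

/-- Lemma 2.2 (omezenost): sum estimate for functions concentrated on disjoint open sets. -/
theorem stmt_0 {K : Type*} [TopologicalSpace K] [CompactSpace K] [T2Space K] [Nonempty K]
    {E : Type*} [NormedAddCommGroup E] [NormedSpace ℝ E] [CompleteSpace E]
    (H : Submodule ℝ C(K, E)) (hH : IsClosed (H : Set C(K, E)))
    (B : Set K)
    (hB : ∀ g ∈ H, ‖g‖ = ⨆ x : B, ‖g (x : K)‖)
    (n : ℕ) (hn : 0 < n) (C : ℝ) (α : Fin n → ℝ) (hα : ∀ i, 0 < α i)
    (U : Fin n → Set K) (hUopen : ∀ i, IsOpen (U i)) (hUne : ∀ i, (U i).Nonempty)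
    (hUdisj : Pairwise (fun i j => Disjoint (U i) (U j)))
    (h : Fin n → C(K, E)) (hmem : ∀ i, h i ∈ H)
    (hC : ∀ i, ∀ x, ‖h i x‖ ≤ C)
    (hsmall : ∀ i, ∀ x ∈ B \ U i, ‖h i x‖ < α i) :
    ‖∑ i, h i‖ ≤ C + ∑ i, α i :=
  stmt_0_general H B hB n hn C α hα U hUne hUdisj h hmem hC hsmall
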